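/- Let F be a probability measure on [0,1] with F({0}) = 0, identified with its CDF, and let v̄ = F⁻(1) (so F(x) < 1 for x < v̄). Then for every x in (0, v̄] there exists a unique z in (0, x) satisfying ∫_0^z y·(1 − F(y)) dy = ∫_z^x (1 − F(y)) dy; in particular the resulting function h : (0, v̄] → (0, v̄) satisfies 0 < h(x) < x for all x in (0, v̄]. -/
import Mathlib


open MeasureTheory ProbabilityTheory Set

noncomputable section

namespace FPA

/-- The unit interval `[0,1] ⊆ ℝ`. -/
def Iu : Set ℝ := Set.Icc 0 1

/-- `μ` is a probability measure on `[0,1]`. -/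
def IsProbOn (μ : Measure ℝ) : Prop := IsProbabilityMeasure μ ∧ μ Iu = 1

/-- A bidding strategy: a Markov kernel from `[0,1]` to `[0,1]`. -/
def IsStrategy (s : Kernel ℝ ℝ) : Prop := IsMarkovKernel s ∧ ∀ v : ℝ, s v Iu = 1

/-- The buyer's utility `u(b,h;v) = (v−b)·1{b ≥ h}`. -/
def util (b h v : ℝ) : ℝ := (v - b) * (if h ≤ b then 1 else 0)

/-- Expected utility `U_F(s,H)`. -/
def eUtil (F : Measure ℝ) (s : Kernel ℝ ℝ) (H : Measure ℝ) : ℝ :=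
  ∫ v, ∫ h, ∫ b, util b h v ∂(s v) ∂H ∂F

/-- Regret `Reg_F(s,H) = sup_{s'∈S} U_F(s',H) − U_F(s,H)`. -/
def regret (F : Measure ℝ) (s : Kernel ℝ ℝ) (H : Measure ℝ) : ℝ :=
  (⨆ s' : {k : Kernel ℝ ℝ // IsStrategy k}, eUtil F s'.1 H) - eUtil F s H

/-- Induced bid distribution `P_{s,F}`. -/
def bidDist (F : Measure ℝ) (s : Kernel ℝ ℝ) : Measure ℝ := F.bind (fun v => s v)

/-- CDF of a measure on `[0,1]`: `F(x) = F([0,x])`. -/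
def cdf01 (F : Measure ℝ) (x : ℝ) : ℝ := (F (Set.Iic x)).toReal

/-- Generalized inverse `F⁻(t) = inf {x ∈ [0,1] : F(x) ≥ t}`. -/
def qinv (F : Measure ℝ) (t : ℝ) : ℝ := sInf {x | x ∈ Iu ∧ t ≤ cdf01 F x}

/-- Full-information benchmark against a deterministic highest competing bid `h`. -/
def bench (F : Measure ℝ) (h : ℝ) : ℝ := ∫ v, (v - h) * (if h ≤ v then 1 else 0) ∂F

/-- Full-information regret `R_F(s,H)`. -/
def fregret (F : Measure ℝ) (s : Kernel ℝ ℝ) (H : Measure ℝ) : ℝ :=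
  (∫ h, bench F h ∂H) - eUtil F s H

/-- Absolute continuity of a function on `[0,1]` (FTC characterization). -/
def AbsContOn01 (f : ℝ → ℝ) : Prop :=
  ∃ g : ℝ → ℝ, IntervalIntegrable g volume 0 1 ∧
    ∀ x ∈ Iu, f x = f 0 + ∫ t in (0:ℝ)..x, g t

/-- The set of quantiles corresponding to value `v`: `Y(v) = {y ∈ [0,1] : F⁻(y) = v}`. -/
def Yset (F : Measure ℝ) (v : ℝ) : Set ℝ := {y | y ∈ Iu ∧ qinv F y = v}

/-- Uniform distribution on a set `A ⊆ ℝ`. -/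
def unifOn (A : Set ℝ) : Measure ℝ := (volume A)⁻¹ • volume.restrict A

/-- `s` is the bidding strategy corresponding to the quantile-based bidding strategy `Q`:
it bids `Q(F(v))` when `F({v}) = 0`, and the pushforward under `Q` of the uniform
distribution on `Y(v)` when `F({v}) > 0`. -/
def IsQuantileStrategy (F : Measure ℝ) (Q : ℝ → ℝ) (s : Kernel ℝ ℝ) : Prop :=
  IsStrategy s ∧ ∀ v ∈ Iu,
    s v = if F {v} = 0 then Measure.dirac (Q (cdf01 F v)) else (unifOn (Yset F v)).map Q

/-- The candidate worst-case highest-competing-bid CDF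
`H*(x) = exp(−∫_{(Q*)⁻¹(x)}^1 dt/(1−F(Q*(t))))`. -/
def Hstar (F : Measure ℝ) (Q : ℝ → ℝ) (x : ℝ) : ℝ :=
  Real.exp (-(∫ t in (Function.invFunOn Q Iu x)..(1:ℝ), 1 / (1 - cdf01 F (Q t))))


/-- the auxiliary function `h`: for a value distribution `F` on `[0,1]`
with `F({0}) = 0` and `v̄ = F⁻(1)`, for every `x ∈ (0, v̄]` there is a unique `z ∈ (0, x)`
with `∫_0^z y·(1 − F(y)) dy = ∫_z^x (1 − F(y)) dy`; in particular the resulting function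
satisfies `0 < h(x) < x`. -/
theorem auxiliary_h_exists_unique
    (F : Measure ℝ) (hF : IsProbOn F) (hF0 : F {0} = 0) :
    ∀ x ∈ Set.Ioc (0:ℝ) (qinv F 1),
      ∃! z : ℝ, z ∈ Set.Ioo 0 x ∧
        (∫ y in (0:ℝ)..z, y * (1 - cdf01 F y)) = ∫ y in z..x, (1 - cdf01 F y) := by
  obtain ⟨hprob, hIu⟩ := hF
  intro x hx
  obtain ⟨hx0, hxv⟩ := hx
  set c : ℝ → ℝ := fun y => 1 - cdf01 F y with hc
  have hcv : ∀ y, c y = 1 - cdf01 F y := fun y => rfl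
  have hmono : Monotone (cdf01 F) := fun a b hab => by
    exact ENNReal.toReal_mono (measure_ne_top F _) (measure_mono (Iic_subset_Iic.2 hab))
  have hcdf_le : ∀ y, cdf01 F y ≤ 1 := fun y => by
    have := measure_mono (subset_univ (Set.Iic y)) (μ := F)
    simpa [cdf01] using ENNReal.toReal_mono (by simp) (this.trans_eq (measure_univ))
  have hcdf_nonneg : ∀ y, 0 ≤ cdf01 F y := fun y => ENNReal.toReal_nonneg
  have hmeas : Measurable (cdf01 F) := hmono.measurable
  -- interval integrability of φ * c for continuous φ
  have hint : ∀ (φ : ℝ → ℝ), Continuous φ → ∀ a b : ℝ,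
      IntervalIntegrable (fun y => φ y * c y) volume a b := by
    intro φ hφ a b
    rw [intervalIntegrable_iff]
    obtain ⟨M, hM⟩ := (isCompact_uIcc (a := a) (b := b)).exists_bound_of_continuousOn
      hφ.continuousOn
    refine Measure.integrableOn_of_bounded (M := |M| + |M|) measure_Ioc_lt_top.ne ?_ ?_
    · exact ((hφ.measurable.mul ((measurable_const.sub hmeas))).aestronglyMeasurable)
    · refine (ae_restrict_iff' measurableSet_uIoc).2 (Filter.Eventually.of_forall fun y hy => ?_)
      have h1 : ‖φ y‖ ≤ |M| := le_trans (hM y (uIoc_subset_uIcc hy)) (le_abs_self M)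
      have h2 : ‖c y‖ ≤ 1 := by
        rw [Real.norm_eq_abs, hcv, abs_le]
        constructor
        · linarith [hcdf_le y]
        · linarith [hcdf_nonneg y]
      calc ‖φ y * c y‖ = ‖φ y‖ * ‖c y‖ := norm_mul _ _
        _ ≤ |M| * 1 := mul_le_mul h1 h2 (norm_nonneg _) (abs_nonneg _)
        _ ≤ |M| + |M| := by linarith [abs_nonneg M]
  have hint1 : ∀ a b : ℝ, IntervalIntegrable c volume a b := by
    intro a b; simpa using hint (fun _ => 1) continuous_const a b
  have hint2 : ∀ a b : ℝ, IntervalIntegrable (fun y => y * c y) volume a b :=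
    hint id continuous_id
  have hint3 : ∀ a b : ℝ, IntervalIntegrable (fun y => (y + 1) * c y) volume a b :=
    hint (fun y => y + 1) (by continuity)
  -- positivity of c on [0, x)
  have hcpos : ∀ y ∈ Set.Ico (0:ℝ) x, 0 < c y := by
    intro y hy
    have hylt : y < qinv F 1 := lt_of_lt_of_le hy.2 hxv
    have hq1 : qinv F 1 ≤ 1 := by
      have h4 : F (Set.Iic 1) = 1 :=
        le_antisymm prob_le_one (hIu ▸ measure_mono (fun w hw => hw.2))
      have hcdf1 : cdf01 F 1 = 1 := by simp [cdf01, h4]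
      exact csInf_le ⟨0, fun w hw => hw.1.1⟩ ⟨⟨zero_le_one, le_refl (1:ℝ)⟩, hcdf1.ge⟩
    by_contra h
    push_neg at h
    rw [hcv] at h
    have : (1:ℝ) ≤ cdf01 F y := by linarith
    have hyS : y ∈ {w | w ∈ Iu ∧ (1:ℝ) ≤ cdf01 F w} :=
      ⟨⟨hy.1, le_of_lt (lt_of_lt_of_le hylt hq1)⟩, this⟩
    have : qinv F 1 ≤ y := csInf_le ⟨0, fun w hw => hw.1.1⟩ hyS
    linarith
  -- the primitive g
  set g : ℝ → ℝ := fun z => ∫ y in (0:ℝ)..z, (y + 1) * c y with hg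
  have hgcont : Continuous g := intervalIntegral.continuous_primitive hint3 0
  have hg0 : g 0 = 0 := intervalIntegral.integral_same
  have hgsplit : ∀ z, g z = (∫ y in (0:ℝ)..z, y * c y) + ∫ y in (0:ℝ)..z, c y := by
    intro z
    rw [hg]
    rw [← intervalIntegral.integral_add (hint2 0 z) (hint1 0 z)]
    apply intervalIntegral.integral_congr
    intro y _; ring
  have hstrict : StrictMonoOn g (Set.Icc 0 x) := by
    intro a ha b hb hab
    have key : g a + ∫ y in a..b, (y + 1) * c y = g b :=
      intervalIntegral.integral_add_adjacent_intervals (hint3 0 a) (hint3 a b)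
    have hpos : 0 < ∫ y in a..b, (y + 1) * c y := by
      apply intervalIntegral.intervalIntegral_pos_of_pos_on (hint3 a b) _ hab
      intro y hy
      have hy0 : 0 ≤ y := le_of_lt (lt_of_le_of_lt ha.1 hy.1)
      have hyx : y < x := lt_of_lt_of_le hy.2 hb.2
      exact mul_pos (by linarith) (hcpos y ⟨hy0, hyx⟩)
    linarith
  have hBpos : 0 < ∫ y in (0:ℝ)..x, c y := by
    apply intervalIntegral.intervalIntegral_pos_of_pos_on (hint1 0 x) _ hx0
    intro y hy; exact hcpos y ⟨le_of_lt hy.1, hy.2⟩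
  have hApos : 0 < ∫ y in (0:ℝ)..x, y * c y := by
    apply intervalIntegral.intervalIntegral_pos_of_pos_on (hint2 0 x) _ hx0
    intro y hy; exact mul_pos hy.1 (hcpos y ⟨le_of_lt hy.1, hy.2⟩)
  set B : ℝ := ∫ y in (0:ℝ)..x, c y with hB
  suffices h : ∃! z : ℝ, z ∈ Set.Ioo 0 x ∧
      (∫ y in (0:ℝ)..z, y * c y) = ∫ y in z..x, c y from h
  -- key equivalence
  have hequiv : ∀ z ∈ Set.Ioo (0:ℝ) x,
      ((∫ y in (0:ℝ)..z, y * c y) = ∫ y in z..x, c y) ↔ g z = B := by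
    intro z _
    have hsplitB : (∫ y in (0:ℝ)..z, c y) + ∫ y in z..x, c y = B :=
      intervalIntegral.integral_add_adjacent_intervals (hint1 0 z) (hint1 z x)
    rw [hgsplit z]
    constructor <;> intro h <;> linarith
  -- existence
  have hmem : B ∈ Set.Ioo (g 0) (g x) := by
    rw [hg0, hgsplit x]
    exact ⟨hBpos, by linarith⟩
  obtain ⟨z, hzmem, hzeq⟩ := intermediate_value_Ioo (le_of_lt hx0) hgcont.continuousOn hmem
  refine ⟨z, ⟨hzmem, (hequiv z hzmem).2 hzeq⟩, ?_⟩
  rintro w ⟨hwmem, hweq⟩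
  have h1 : g w = B := (hequiv w hwmem).1 hweq
  exact hstrict.injOn (Set.mem_Icc_of_Ioo hwmem) (Set.mem_Icc_of_Ioo hzmem) (by rw [h1, hzeq])


end FPA
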